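/- For every δ ∈ (0,1) there exists K₀ such that for every integer K ≥ K₀ the following holds: if F₁, …, F_K : [0,∞) → [0,1] are differentiable with F_k(0) = 1/2 for all k, F₁′(t) ≤ 2√(F₁(t))·√(1 − F₁(t)) for all t, and F_k′(t) ≤ 2√(max(F_{k−1}(t) − F_k(t), 0)) for all t and all 2 ≤ k ≤ K, then F_K(t) < 1 for every t with 0 ≤ t < (1 − δ)·√(K/2). In particular, the time needed for F_K to reach 1 is asymptotically at least √(K/2). -/

import Mathlib

open Real Set Filter Topology

/-! Auxiliary sequence `mseq`: `mseq 0 = 3/5`, `mseq (n+1) = mseq n + mseq n/(mseq n + 1)`.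
We use the supersolutions `E_j(t) = 1/2 + (t+1/8)^2 / mseq j` for level `k = j+2`. -/

noncomputable def mseq : ℕ → ℝ
  | 0 => 3/5
  | n+1 => mseq n + mseq n / (mseq n + 1)

lemma mseq_ge (n : ℕ) : 3/5 ≤ mseq n := by
  induction n with
  | zero => norm_num [mseq]
  | succ n ih =>
    have h2 : 0 ≤ mseq n / (mseq n + 1) := div_nonneg (by linarith) (by linarith)
    simp only [mseq]
    linarith

lemma mseq_pos (n : ℕ) : 0 < mseq n := lt_of_lt_of_le (by norm_num) (mseq_ge n)

lemma mseq_succ (n : ℕ) : mseq (n+1) = mseq n + mseq n / (mseq n + 1) := by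
  simp only [mseq]

lemma mseq_mono : Monotone mseq := by
  apply monotone_nat_of_le_succ
  intro n
  rw [mseq_succ]
  have h2 : 0 ≤ mseq n / (mseq n + 1) :=
    div_nonneg (by linarith [mseq_ge n]) (by linarith [mseq_ge n])
  linarith

lemma mseq_key (n : ℕ) : (mseq (n+1))^2 ≤ mseq n * (mseq (n+1) + 1) := by
  have hm := mseq_ge n
  have h1 : 0 < mseq n + 1 := by linarith
  rw [mseq_succ]
  have h1' : mseq n + 1 ≠ 0 := ne_of_gt h1
  field_simp
  ring_nf
  nlinarith [hm, sq_nonneg (mseq n)]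

lemma ratio_mono {a b : ℝ} (ha : 0 ≤ a) (hab : a ≤ b) : a/(a+1) ≤ b/(b+1) := by
  have hb : 0 ≤ b := le_trans ha hab
  rw [div_le_div_iff₀ (by linarith) (by linarith)]
  nlinarith

lemma mseq_growth (J i : ℕ) : mseq J + i * (mseq J / (mseq J + 1)) ≤ mseq (J + i) := by
  induction i with
  | zero => simp
  | succ i ih =>
    have hmono : mseq J ≤ mseq (J + i) := mseq_mono (Nat.le_add_right J i)
    have hr := ratio_mono (by linarith [mseq_ge J] : (0:ℝ) ≤ mseq J) hmono
    have hstep : mseq (J + (i+1)) = mseq (J+i) + mseq (J+i)/(mseq (J+i)+1) := by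
      have : J + (i+1) = (J+i)+1 := rfl
      rw [this, mseq_succ]
    rw [hstep]
    push_cast
    linarith

lemma mseq_lin (n : ℕ) : 3/5 + 3/8 * n ≤ mseq n := by
  have h := mseq_growth 0 n
  have h0 : mseq 0 = 3/5 := by norm_num [mseq]
  rw [Nat.zero_add] at h
  rw [h0] at h
  norm_num at h
  linarith

/-- Comparison lemma: if `f` can never cross `g` (strict derivative inequality at any
touching point with `t ≥ 0`) and starts below, then it stays below. -/
lemma comp (f g g' : ℝ → ℝ)
    (hf : ∀ t, 0 ≤ t → DifferentiableAt ℝ f t)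
    (hg : ∀ t, HasDerivAt g (g' t) t)
    (h0 : f 0 < g 0)
    (key : ∀ t, 0 ≤ t → f t = g t → deriv f t < g' t) :
    ∀ t, 0 ≤ t → f t ≤ g t := by
  intro T hT
  by_contra hc
  push_neg at hc
  set B : Set ℝ := {t | t ∈ Set.Icc (0:ℝ) T ∧ g t ≤ f t} with hB
  have hTB : T ∈ B := ⟨⟨hT, le_refl T⟩, le_of_lt hc⟩
  have hBne : B.Nonempty := ⟨T, hTB⟩
  have hBbdd : BddBelow B := ⟨0, fun x hx => hx.1.1⟩
  set τ := sInf B with hτdef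
  have hτ0 : 0 ≤ τ := le_csInf hBne (fun x hx => hx.1.1)
  have hτT : τ ≤ T := csInf_le hBbdd hTB
  have hlt : ∀ t, 0 ≤ t → t < τ → f t < g t := by
    intro t ht htτ
    by_contra hcc
    push_neg at hcc
    have : τ ≤ t := csInf_le hBbdd ⟨⟨ht, le_trans htτ.le hτT⟩, hcc⟩
    exact absurd this (not_le.mpr htτ)
  have hcf : ContinuousAt f τ := (hf τ hτ0).continuousAt
  have hcg : ContinuousAt g τ := (hg τ).continuousAt
  have hgef : g τ ≤ f τ := by
    by_contra hcc
    push_neg at hcc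
    have hev : ∀ᶠ x in 𝓝 τ, f x < g x := hcf.eventually_lt hcg hcc
    rcases Metric.eventually_nhds_iff.mp hev with ⟨r, hr, hball⟩
    have hlb : ∀ b ∈ B, τ + r ≤ b := by
      intro b hb
      by_contra hbc
      push_neg at hbc
      have hbτ : τ ≤ b := csInf_le hBbdd hb
      have : dist b τ < r := by
        rw [Real.dist_eq, abs_of_nonneg (by linarith)]
        linarith
      exact absurd hb.2 (not_le.mpr (hball this))
    have : τ + r ≤ τ := le_csInf hBne hlb
    linarith
  have hτpos : 0 < τ := by
    rcases eq_or_lt_of_le hτ0 with h | h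
    · exfalso; rw [← h] at hgef; linarith
    · exact h
  have hfle : f τ ≤ g τ := by
    have hten : Tendsto (fun x => f x - g x) (𝓝[<] τ) (𝓝 (f τ - g τ)) :=
      ((hcf.sub hcg).tendsto).mono_left nhdsWithin_le_nhds
    have hev : ∀ᶠ x in 𝓝[<] τ, f x - g x ≤ 0 := by
      filter_upwards [Ioo_mem_nhdsLT_of_mem (⟨hτpos, le_refl τ⟩ : τ ∈ Set.Ioc 0 τ)]
        with x hx
      have := hlt x hx.1.le hx.2
      linarith
    have := le_of_tendsto hten hev
    linarith
  have heq : f τ = g τ := le_antisymm hfle hgef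
  have hkey := key τ hτ0 heq
  have hder : HasDerivAt (fun t => f t - g t) (deriv f τ - g' τ) τ :=
    ((hf τ hτ0).hasDerivAt).sub (hg τ)
  rw [hasDerivAt_iff_tendsto_slope] at hder
  have hder' : Tendsto (slope (fun t => f t - g t) τ) (𝓝[<] τ) (𝓝 (deriv f τ - g' τ)) :=
    hder.mono_left (nhdsWithin_mono τ (fun x hx => ne_of_lt hx))
  have hev : ∀ᶠ x in 𝓝[<] τ, 0 ≤ slope (fun t => f t - g t) τ x := by
    filter_upwards [Ioo_mem_nhdsLT_of_mem (⟨hτpos, le_refl τ⟩ : τ ∈ Set.Ioc 0 τ)]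
      with x hx
    have hfx : f x < g x := hlt x hx.1.le hx.2
    rw [slope_def_field]
    have hnum : (f x - g x) - (f τ - g τ) ≤ 0 := by
      rw [heq]; linarith
    have hden : x - τ < 0 := by linarith [hx.2]
    have hdd : (0:ℝ) ≤ (-((f x - g x) - (f τ - g τ))) / (-(x - τ)) :=
      div_nonneg (by linarith) (by linarith)
    rw [neg_div_neg_eq] at hdd
    exact hdd
  have := ge_of_tendsto hder' hev
  linarith

lemma eps_le {a b t : ℝ} (ht : 0 ≤ t) (h : ∀ ε : ℝ, 0 < ε → a ≤ b + ε * (1 + t)) :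
    a ≤ b := by
  by_contra hcc
  push_neg at hcc
  have h1t : 0 < 1 + t := by linarith
  have hε : 0 < (a - b) / (2 * (1 + t)) := div_pos (by linarith) (by linarith)
  have := h _ hε
  have heq : (a - b) / (2 * (1 + t)) * (1 + t) = (a - b) / 2 := by
    field_simp
  rw [heq] at this
  linarith

noncomputable def Eb (j : ℕ) (t : ℝ) : ℝ := 1/2 + (t + 1/8)^2 / mseq j

lemma Eb_deriv (j : ℕ) (ε t : ℝ) :
    HasDerivAt (fun u => Eb j u + ε * (1 + u)) (2 * (t + 1/8) / mseq j + ε) t := by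
  have h1 : HasDerivAt (fun u : ℝ => (u + 1/8)^2) (2 * (t + 1/8)) t := by
    have h := ((hasDerivAt_id t).add_const (1/8 : ℝ)).pow 2
    simp at h ⊢
    exact h
  have h2 : HasDerivAt (fun u : ℝ => Eb j u) (2 * (t + 1/8) / mseq j) t := by
    simpa [Eb] using (h1.div_const (mseq j)).const_add (1/2 : ℝ)
  have h3 : HasDerivAt (fun u : ℝ => ε * (1 + u)) ε t := by
    simpa using ((hasDerivAt_id t).const_add (1 : ℝ)).const_mul ε
  exact h2.add h3

set_option maxHeartbeats 2000000 in
theorem stmt13 (δ : ℝ) (hδ0 : 0 < δ) (hδ1 : δ < 1) :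
    ∃ K₀ : ℕ, ∀ K : ℕ, K₀ ≤ K → ∀ F : ℕ → ℝ → ℝ,
      (∀ k, 1 ≤ k → k ≤ K → ∀ t, 0 ≤ t → F k t ∈ Set.Icc (0 : ℝ) 1) →
      (∀ k, 1 ≤ k → k ≤ K → F k 0 = 1 / 2) →
      (∀ k, 1 ≤ k → k ≤ K → ∀ t, 0 ≤ t → DifferentiableAt ℝ (F k) t) →
      (∀ t, 0 ≤ t →
        deriv (F 1) t ≤ 2 * Real.sqrt (F 1 t) * Real.sqrt (1 - F 1 t)) →
      (∀ k, 2 ≤ k → k ≤ K → ∀ t, 0 ≤ t →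
        deriv (F k) t ≤ 2 * Real.sqrt (max (F (k - 1) t - F k t) 0)) →
      ∀ t, 0 ≤ t → t < (1 - δ) * Real.sqrt ((K : ℝ) / 2) → F K t < 1 := by
  classical
  set J : ℕ := ⌈(11:ℝ)/δ⌉₊ with hJdef
  refine ⟨⌈(128:ℝ)/δ^2⌉₊ + ⌈((J:ℝ)+4)*4/δ⌉₊ + J + 4, ?_⟩
  intro K hK F hrange h0 hdiff hd1 hdk t₀ ht₀ ht₀lt
  have hK4 : 4 ≤ K := by omega
  have hKJ4 : J + 4 ≤ K := by omega
  have hK128 : (128:ℝ)/δ^2 ≤ (K:ℝ) := by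
    have h1 : ⌈(128:ℝ)/δ^2⌉₊ ≤ K := by omega
    exact le_trans (Nat.le_ceil _) (Nat.cast_le.mpr h1)
  have hKJR : ((J:ℝ)+4)*4/δ ≤ (K:ℝ) := by
    have h1 : ⌈((J:ℝ)+4)*4/δ⌉₊ ≤ K := by omega
    exact le_trans (Nat.le_ceil _) (Nat.cast_le.mpr h1)
  have hJ11 : (11:ℝ)/δ ≤ (J:ℝ) := Nat.le_ceil _
  -- Base bound for F 1
  have base1 : ∀ t, 0 ≤ t → F 1 t ≤ 1/2 + t := by
    intro t ht
    apply eps_le ht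
    intro ε hε
    have hcomp := comp (F 1) (fun u => 1/2 + u + ε * (1 + u)) (fun _ => 1 + ε)
      (fun u hu => hdiff 1 (by omega) (by omega) u hu)
      (fun u => by
        have h1 : HasDerivAt (fun v : ℝ => 1/2 + v) 1 u := by
          simpa using (hasDerivAt_id u).const_add (1/2 : ℝ)
        have h2 : HasDerivAt (fun v : ℝ => ε * (1 + v)) ε u := by
          simpa using ((hasDerivAt_id u).const_add (1 : ℝ)).const_mul ε
        exact h1.add h2)
      (by
        show F 1 0 < 1/2 + 0 + ε * (1 + 0)
        rw [h0 1 (by omega) (by omega)]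
        nlinarith)
      (by
        intro u hu hEq
        have hmem := hrange 1 (by omega) (by omega) u hu
        have hub : 2 * Real.sqrt (F 1 u) * Real.sqrt (1 - F 1 u) ≤ 1 := by
          have hx := hmem.1
          have hy : (0:ℝ) ≤ 1 - F 1 u := by linarith [hmem.2]
          nlinarith [Real.sq_sqrt hx, Real.sq_sqrt hy,
            sq_nonneg (Real.sqrt (F 1 u) - Real.sqrt (1 - F 1 u))]
        have := hd1 u hu
        show deriv (F 1) u < 1 + ε
        linarith)
      t ht
    simpa using hcomp
  -- Main induction: F (j+2) ≤ Eb j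
  have main : ∀ j : ℕ, j + 2 ≤ K → ∀ t, 0 ≤ t → F (j+2) t ≤ Eb j t := by
    intro j
    induction j with
    | zero =>
      intro hle t ht
      apply eps_le ht
      intro ε hε
      have hm0 : mseq 0 = 3/5 := by norm_num [mseq]
      have hcomp := comp (F 2) (fun u => Eb 0 u + ε * (1 + u))
        (fun u => 2 * (u + 1/8) / mseq 0 + ε)
        (fun u hu => hdiff 2 (by omega) (by omega) u hu)
        (fun u => Eb_deriv 0 ε u)
        (by
          show F 2 0 < Eb 0 0 + ε * (1 + 0)
          rw [h0 2 (by omega) (by omega)]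
          simp only [Eb, hm0]
          nlinarith)
        (by
          intro u hu hEq
          have hd := hdk 2 (by omega) (by omega) u hu
          norm_num at hd
          have hF1 := base1 u hu
          have hgap : F 1 u - F 2 u ≤ ((5/3) * (u + 1/8))^2 := by
            have hEq' : F 2 u = Eb 0 u + ε * (1 + u) := hEq
            rw [hEq']
            simp only [Eb, hm0]
            have hεu : 0 ≤ ε * (1 + u) := by positivity
            nlinarith [sq_nonneg u, hu]
          have h53 : (0:ℝ) ≤ (5/3) * (u + 1/8) := by linarith
          have hsq : Real.sqrt (max (F 1 u - F 2 u) 0) ≤ (5/3) * (u + 1/8) := by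
            calc Real.sqrt (max (F 1 u - F 2 u) 0)
                ≤ Real.sqrt (((5/3) * (u + 1/8))^2) :=
                  Real.sqrt_le_sqrt (max_le hgap (sq_nonneg _))
              _ = (5/3) * (u + 1/8) := Real.sqrt_sq h53
          have : deriv (F 2) u ≤ 2 * ((5/3) * (u + 1/8)) := by linarith
          show deriv (F 2) u < 2 * (u + 1/8) / mseq 0 + ε
          have heq2 : 2 * (u + 1/8) / mseq 0 = 2 * ((5/3) * (u + 1/8)) := by
            rw [hm0]; ring
          rw [heq2]
          linarith)
        t ht
      simpa using hcomp
    | succ j ih =>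
      intro hle t ht
      have ihj : ∀ t, 0 ≤ t → F (j+2) t ≤ Eb j t := ih (by omega)
      apply eps_le ht
      intro ε hε
      have hmj := mseq_pos j
      have hmj1 := mseq_pos (j+1)
      have hcomp := comp (F (j+3)) (fun u => Eb (j+1) u + ε * (1 + u))
        (fun u => 2 * (u + 1/8) / mseq (j+1) + ε)
        (fun u hu => hdiff (j+3) (by omega) (by omega) u hu)
        (fun u => Eb_deriv (j+1) ε u)
        (by
          show F (j+3) 0 < Eb (j+1) 0 + ε * (1 + 0)
          rw [h0 (j+3) (by omega) (by omega)]
          simp only [Eb]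
          have hpos : 0 < ((0:ℝ) + 1/8)^2 / mseq (j+1) := div_pos (by norm_num) hmj1
          nlinarith)
        (by
          intro u hu hEq
          have hd := hdk (j+3) (by omega) (by omega) u hu
          have hidx : j + 3 - 1 = j + 2 := rfl
          rw [hidx] at hd
          have hFj := ihj u hu
          have hkey := mseq_key j
          have hgap : F (j+2) u - F (j+3) u ≤ ((u + 1/8) / mseq (j+1))^2 := by
            have hEq' : F (j+3) u = Eb (j+1) u + ε * (1 + u) := hEq
            rw [hEq']
            have hfrac : (u+1/8)^2 / mseq j
                ≤ (u+1/8)^2 / mseq (j+1) + ((u+1/8) / mseq (j+1))^2 := by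
              have h1 : 1 / mseq j ≤ 1 / mseq (j+1) + 1 / (mseq (j+1))^2 := by
                rw [div_add_div _ _ (ne_of_gt hmj1) (ne_of_gt (pow_pos hmj1 2)),
                  div_le_div_iff₀ hmj (mul_pos hmj1 (pow_pos hmj1 2))]
                nlinarith [hkey]
              have hD2 : (0:ℝ) ≤ (u+1/8)^2 := sq_nonneg _
              calc (u+1/8)^2 / mseq j = (u+1/8)^2 * (1 / mseq j) := by ring
                _ ≤ (u+1/8)^2 * (1 / mseq (j+1) + 1 / (mseq (j+1))^2) :=
                    mul_le_mul_of_nonneg_left h1 hD2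
                _ = (u+1/8)^2 / mseq (j+1) + ((u+1/8) / mseq (j+1))^2 := by
                    rw [div_pow]; ring
            have hεu : 0 ≤ ε * (1 + u) := by positivity
            have hFj' : F (j+2) u ≤ 1/2 + (u+1/8)^2 / mseq j := hFj
            simp only [Eb]
            linarith
          have hDpos : (0:ℝ) ≤ (u + 1/8) / mseq (j+1) :=
            div_nonneg (by linarith) hmj1.le
          have hsq : Real.sqrt (max (F (j+2) u - F (j+3) u) 0) ≤ (u + 1/8) / mseq (j+1) := by
            calc Real.sqrt (max (F (j+2) u - F (j+3) u) 0)
                ≤ Real.sqrt (((u + 1/8) / mseq (j+1))^2) :=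
                  Real.sqrt_le_sqrt (max_le hgap (sq_nonneg _))
              _ = (u + 1/8) / mseq (j+1) := Real.sqrt_sq hDpos
          have hd2 : deriv (F (j+3)) u ≤ 2 * ((u + 1/8) / mseq (j+1)) := by linarith
          show deriv (F (j+3)) u < 2 * (u + 1/8) / mseq (j+1) + ε
          have heq2 : 2 * (u + 1/8) / mseq (j+1) = 2 * ((u + 1/8) / mseq (j+1)) := by ring
          rw [heq2]
          linarith)
        t ht
      simpa using hcomp
  -- Apply at level K
  have hKn : K - 2 + 2 = K := by omega
  have hbound : F K t₀ ≤ Eb (K-2) t₀ := by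
    have := main (K-2) (by omega) t₀ ht₀
    rwa [hKn] at this
  -- Growth of mseq
  set n : ℕ := K - 2 with hndef
  obtain ⟨i, hi⟩ : ∃ i : ℕ, n = J + i := ⟨n - J, by omega⟩
  have hgrow := mseq_growth J i
  have hmJ := mseq_pos J
  have hJlin := mseq_lin J
  have hratio : 1 - δ/4 ≤ mseq J / (mseq J + 1) := by
    have hJδ : 11 ≤ (J:ℝ) * δ := by
      rw [div_le_iff₀ hδ0] at hJ11
      linarith
    have h4δ : 4/δ ≤ mseq J + 1 := by
      rw [div_le_iff₀ hδ0]
      nlinarith [hJδ, hJlin, hδ0.le, hδ1,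
        mul_nonneg (by linarith [hJlin] : (0:ℝ) ≤ mseq J + 1 - (3/8*(J:ℝ) + 8/5)) hδ0.le]
    rw [le_div_iff₀ (by linarith : (0:ℝ) < mseq J + 1)]
    have h1 : 1 ≤ (δ/4) * (mseq J + 1) := by
      rw [div_le_iff₀ hδ0] at h4δ
      nlinarith
    nlinarith
  have hiR : (i:ℝ) = (K:ℝ) - 2 - (J:ℝ) := by
    have h1 : (n:ℝ) = (K:ℝ) - 2 := by
      rw [hndef]
      push_cast [Nat.cast_sub (by omega : 2 ≤ K)]
      ring
    have h2 : (n:ℝ) = (J:ℝ) + (i:ℝ) := by exact_mod_cast congrArg (Nat.cast (R := ℝ)) hi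
    linarith
  have hmn : (1 - δ/4) * ((K:ℝ) - 2 - (J:ℝ)) ≤ mseq n := by
    rw [hi]
    have hinn : (0:ℝ) ≤ (i:ℝ) := Nat.cast_nonneg i
    calc (1 - δ/4) * ((K:ℝ) - 2 - (J:ℝ)) = (1 - δ/4) * (i:ℝ) := by rw [← hiR]
      _ ≤ (mseq J / (mseq J + 1)) * (i:ℝ) := mul_le_mul_of_nonneg_right hratio hinn
      _ ≤ mseq J + (i:ℝ) * (mseq J / (mseq J + 1)) := by nlinarith
      _ ≤ mseq (J + i) := hgrow
  -- sqrt facts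
  set S : ℝ := Real.sqrt ((K:ℝ)/2) with hSdef
  have hSnn : 0 ≤ S := Real.sqrt_nonneg _
  have hS2 : S^2 = (K:ℝ)/2 := Real.sq_sqrt (by positivity)
  have hK128' : (128:ℝ) ≤ (K:ℝ) * δ^2 := by
    rw [div_le_iff₀ (pow_pos hδ0 2)] at hK128
    linarith
  have hS8 : 8/δ ≤ S := by
    have h1 : (8/δ)^2 ≤ (K:ℝ)/2 := by
      rw [div_pow]
      rw [div_le_div_iff₀ (pow_pos hδ0 2) (by norm_num : (0:ℝ) < 2)]
      nlinarith [hK128']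
    calc 8/δ = Real.sqrt ((8/δ)^2) := (Real.sqrt_sq (by positivity)).symm
      _ ≤ S := Real.sqrt_le_sqrt h1
  have h8S : 8 ≤ δ * S := by
    rw [div_le_iff₀ hδ0] at hS8
    linarith
  have hSK : S ≤ δ * (K:ℝ) / 16 := by
    nlinarith [mul_le_mul_of_nonneg_right h8S hSnn, hS2, hSnn, hδ0]
  have hδK : 4*((J:ℝ)+4) ≤ δ * (K:ℝ) := by
    rw [div_le_iff₀ hδ0] at hKJR
    linarith
  have hJnn : (0:ℝ) ≤ (J:ℝ) := Nat.cast_nonneg J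
  have hδJ : 0 ≤ δ * (J:ℝ) := mul_nonneg hδ0.le hJnn
  -- Final inequality
  have hm2 : (t₀ + 1/8)^2 < mseq n / 2 := by
    have ht8 : t₀ + 1/8 < (1-δ)*S + 1/8 := by linarith
    have hsqlt : (t₀+1/8)^2 < ((1-δ)*S + 1/8)^2 := by
      have h1 : 0 ≤ t₀ + 1/8 := by linarith
      nlinarith
    have hfin : ((1-δ)*S + 1/8)^2 ≤ mseq n / 2 := by
      have e1 : ((1-δ)*S + 1/8)^2 = (1-δ)^2 * S^2 + (1-δ)*S/4 + 1/64 := by ring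
      have e2 : (1-δ)^2 * S^2 ≤ (1-δ) * S^2 := by nlinarith [sq_nonneg S]
      have e3 : (1-δ)*S/4 ≤ S/4 := by nlinarith
      have e4 : S/4 ≤ δ*(K:ℝ)/64 := by linarith
      have e5 : (1-δ) * S^2 = (1-δ) * (K:ℝ)/2 := by rw [hS2]; ring
      -- need: (1-δ)K/2 + δK/64 + 1/64 ≤ (1-δ/4)(K-2-J)/2 ≤ mseq n / 2
      have e6 : (1-δ)*(K:ℝ)/2 + δ*(K:ℝ)/64 + 1/64 ≤ (1 - δ/4) * ((K:ℝ) - 2 - (J:ℝ)) / 2 := by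
        nlinarith [hδK, hδJ, hδ0, hδ1, hJnn]
      nlinarith [hmn]
    linarith
  have hEb : Eb n t₀ < 1 := by
    have hmnpos := mseq_pos n
    have : (t₀ + 1/8)^2 / mseq n < 1/2 := by
      rw [div_lt_iff₀ hmnpos]
      linarith
    simp only [Eb]
    linarith
  linarith
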